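/- Let T be a finite tree (a connected acyclic simple graph) on n vertices and let r be a distinguished vertex (the root). Then there exists a path P in T with r as one endpoint such that every connected component of the subgraph of T induced on the vertices not lying on P has fewer than n/2 vertices. -/

import Mathlib

open scoped ENNReal Classical

/-- The graph `G` with vertex `x` "failed": edges incident to `x` are removed,
so that walks in `G.avoid x` are exactly walks of `G` avoiding `x`
(for endpoints different from `x`). -/
def SimpleGraph.avoid {V : Type*} (G : SimpleGraph V) (x : V) : SimpleGraph V where
  Adj a b := G.Adj a b ∧ a ≠ x ∧ b ≠ x
  symm := ⟨fun _ _ h => ⟨h.1.symm, h.2.2, h.2.1⟩⟩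
  loopless := ⟨fun a h => h.1.ne rfl⟩

/-- `δ(a,b,x)` : the distance (in `ℕ∞`) between `a` and `b` in `G − x`,
with the convention that it is `∞` if `a = x` or `b = x`. -/
noncomputable def davoid {V : Type*} (G : SimpleGraph V) (a b x : V) : ℕ∞ :=
  if a = x ∨ b = x then ⊤ else (G.avoid x).edist a b

/-- `δ(v,B)` : distance from `v` to the set `B`. -/
noncomputable def dset {V : Type*} (G : SimpleGraph V) (v : V) (B : Set V) : ℕ∞ :=
  ⨅ w ∈ B, G.edist v w

/-- `δ(v,B,x)` : distance from `v` to the set `B` in `G − x`. -/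
noncomputable def dsetAvoid {V : Type*} (G : SimpleGraph V) (v : V) (B : Set V) (x : V) : ℕ∞ :=
  ⨅ w ∈ B, davoid G v w x

/-- `Ball(v,A,B) = {w ∈ A : δ(v,w) < δ(v,B)}`. -/
def ball {V : Type*} (G : SimpleGraph V) (v : V) (A B : Set V) : Set V :=
  {w ∈ A | G.edist v w < dset G v B}

/-- `Ball^x(v,A,B) = {w ∈ A : δ(v,w,x) < δ(v,B,x)}`. -/
def ballAvoid {V : Type*} (G : SimpleGraph V) (v : V) (A B : Set V) (x : V) : Set V :=
  {w ∈ A | davoid G v w x < dsetAvoid G v B x}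

/-- `Ball^x(v,A,B,ε) = {w ∈ A : (1+ε)·δ(v,w,x) < δ(v,B,x)}`. -/
def ballTrunc {V : Type*} (G : SimpleGraph V) (v : V) (A B : Set V) (x : V) (ε : ℝ) : Set V :=
  {w ∈ A | ENNReal.ofReal (1 + ε) * (davoid G v w x : ℝ≥0∞) < (dsetAvoid G v B x : ℝ≥0∞)}

/-- `C^x(w,A,B,ε) = {v ∈ V : (1+ε)·δ(v,w,x) < δ(v,B,x)}`. -/
def clusterTrunc {V : Type*} (G : SimpleGraph V) (w : V) (B : Set V) (x : V) (ε : ℝ) : Set V :=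
  {v | ENNReal.ofReal (1 + ε) * (davoid G v w x : ℝ≥0∞) < (dsetAvoid G v B x : ℝ≥0∞)}

/-! Among the paths starting at `r`, the largest component of the complement strictly decreases
under the following move. If a component `C` of `T - P` has at least `n/2` vertices, it is
attached to `P` by a single edge `c x` (`x` on `P`), since a second edge would close a cycle.
Cut `P` at `x` and append `c`. A component of the new complement cannot cross the edge `c x`,
so it lies either in `C - c` or in the complement of `C` minus `x`, and both have fewer than
`|C|` vertices because `n - |C| ≤ |C|`. -/

namespace SimpleGraph

variable {V : Type*} {G : SimpleGraph V}

theorem IsAcyclic.eq_of_adj_of_walks (hG : G.IsAcyclic) {a b c x : V}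
    (p : G.Walk a c) (q : G.Walk x b) (hb : b ∉ p.support) (ha : a ∉ q.support)
    (hcx : G.Adj c x) (hab : G.Adj a b) : a = c ∧ b = x := by
  have hbridge := isBridge_iff_forall_walk_mem_edges.mp
    (isAcyclic_iff_forall_adj_isBridge.mp hG hab) (p.append (Walk.cons hcx q))
  rw [Walk.edges_append, Walk.edges_cons, List.mem_append, List.mem_cons] at hbridge
  rcases hbridge with hp | he | hq
  · exact absurd (p.snd_mem_support_of_mem_edges hp) hb
  · rcases Sym2.eq_iff.mp he with h | ⟨-, rfl⟩
    · exact h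
    · exact absurd p.end_mem_support hb
  · exact absurd (q.fst_mem_support_of_mem_edges hq) ha

theorem Walk.mem_of_forall_adj_eq {K : Set V} {c : V}
    (hK : ∀ a ∈ K, ∀ b ∉ K, G.Adj a b → a = c)
    {u w : V} (p : G.Walk u w) (hc : c ∉ p.support) (hu : u ∈ K) : w ∈ K := by
  by_contra hw
  obtain ⟨d, hd, hdK, hdK'⟩ := p.exists_boundary_dart K hu hw
  exact hc (hK _ hdK _ hdK' d.adj ▸ p.dart_fst_mem_support_of_mem_darts hd)

namespace ConnectedComponent

variable {S : Set V} (C : (G.induce S).ConnectedComponent)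

theorem image_val_supp_subset : Subtype.val '' C.supp ⊆ S := by
  rintro _ ⟨z, -, rfl⟩
  exact z.2

theorem mem_image_val_supp_of_walk {u w : V} (hu : u ∈ Subtype.val '' C.supp) (p : G.Walk u w)
    (hp : ∀ z ∈ p.support, z ∈ S) : w ∈ Subtype.val '' C.supp := by
  obtain ⟨u, hu, rfl⟩ := hu
  refine ⟨⟨w, hp w p.end_mem_support⟩, ?_, rfl⟩
  rw [mem_supp_iff] at hu ⊢
  rw [← hu]
  exact ConnectedComponent.sound (p.induce S hp).reachable.symm

theorem exists_walk_of_mem_image_val_supp {u w : V} (hu : u ∈ Subtype.val '' C.supp)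
    (hw : w ∈ Subtype.val '' C.supp) : ∃ p : G.Walk u w, ∀ z ∈ p.support, z ∈ S := by
  obtain ⟨u, hu, rfl⟩ := hu
  obtain ⟨w, hw, rfl⟩ := hw
  obtain ⟨p⟩ := C.reachable_of_mem_supp hu hw
  refine ⟨p.map (Embedding.induce S).toHom, fun z hz => ?_⟩
  obtain ⟨z, -, rfl⟩ := List.mem_map.mp (p.support_map _ ▸ hz)
  exact z.2

theorem mem_image_val_supp_of_adj {u w : V} (hu : u ∈ Subtype.val '' C.supp) (hw : w ∈ S)
    (h : G.Adj u w) : w ∈ Subtype.val '' C.supp :=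
  C.mem_image_val_supp_of_walk hu h.toWalk (by simp [C.image_val_supp_subset hu, hw])

theorem exists_adj_image_val_supp_of_not_mem (hG : G.Preconnected) {y : V} (hy : y ∉ S) :
    ∃ c ∈ Subtype.val '' C.supp, ∃ x ∉ S, G.Adj c x := by
  obtain ⟨u, hu⟩ := C.nonempty_supp
  have huC : u.1 ∈ Subtype.val '' C.supp := ⟨u, hu, rfl⟩
  obtain ⟨p⟩ := hG u y
  obtain ⟨d, -, hdC, hdC'⟩ :=
    p.exists_boundary_dart _ huC fun h => hy (C.image_val_supp_subset h)
  exact ⟨d.fst, hdC, d.snd, fun hS => hdC' (C.mem_image_val_supp_of_adj hdC hS d.adj), d.adj⟩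

theorem eq_of_adj_of_mem_support (hG : G.IsAcyclic) {r v : V} {P : G.Walk r v}
    (C : (G.induce {z | z ∉ P.support}).ConnectedComponent) {a b c x : V}
    (ha : a ∈ Subtype.val '' C.supp) (hc : c ∈ Subtype.val '' C.supp)
    (hb : b ∈ P.support) (hx : x ∈ P.support) (hcx : G.Adj c x) (hab : G.Adj a b) :
    a = c ∧ b = x := by
  obtain ⟨p, hp⟩ := C.exists_walk_of_mem_image_val_supp ha hc
  refine hG.eq_of_adj_of_walks p ((P.takeUntil x hx).reverse.append (P.takeUntil b hb))
    (fun h => hp b h hb) (fun h => C.image_val_supp_subset ha ?_) hcx hab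
  rw [Walk.support_append, List.mem_append, Walk.support_reverse, List.mem_reverse] at h
  rcases h with h | h
  · exact P.support_takeUntil_subset_support hx h
  · exact P.support_takeUntil_subset_support hb (List.mem_of_mem_tail h)

end ConnectedComponent

theorem IsTree.exists_isPath_ncard_supp_lt [Finite V] (hG : G.IsTree) {r v : V} {P : G.Walk r v}
    (hP : P.IsPath) (C : (G.induce {z | z ∉ P.support}).ConnectedComponent)
    (hC : Nat.card V ≤ 2 * C.supp.ncard) :
    ∃ (v' : V) (P' : G.Walk r v'), P'.IsPath ∧
      ∀ D : (G.induce {z | z ∉ P'.support}).ConnectedComponent,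
        D.supp.ncard < C.supp.ncard := by
  set K := Subtype.val '' C.supp
  obtain ⟨c, hcK, x, hxP, hcx⟩ :=
    C.exists_adj_image_val_supp_of_not_mem hG.connected.preconnected (y := r) (by simp)
  rw [Set.mem_ofPred_eq, not_not] at hxP
  have hcP : c ∉ P.support := C.image_val_supp_subset hcK
  have hxK : x ∉ K := fun h => C.image_val_supp_subset h hxP
  have hleave : ∀ a ∈ K, ∀ b ∉ K, G.Adj a b → a = c := fun a ha b hb hab =>
    (C.eq_of_adj_of_mem_support hG.isAcyclic ha hcK
      (not_not.mp fun h => hb (C.mem_image_val_supp_of_adj ha h hab)) hxP hcx hab).1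
  set P' := (P.takeUntil x hxP).concat hcx.symm
  have hP'supp : P'.support = (P.takeUntil x hxP).support ++ [c] := Walk.support_concat _ _
  have hP' : P'.IsPath := (hP.takeUntil hxP).concat
    (fun h => hcP (P.support_takeUntil_subset_support hxP h)) hcx.symm
  refine ⟨c, P', hP', fun D => ?_⟩
  set L := Subtype.val '' D.supp
  have hcP' : c ∈ P'.support := by simp [hP'supp]
  have hcL : c ∉ L := fun h => D.image_val_supp_subset h hcP'
  have hxL : x ∉ L := fun h => D.image_val_supp_subset h (by simp [hP'supp])
  have hside : L ⊆ K ∨ L ⊆ Kᶜ := by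
    by_contra! h
    obtain ⟨u, huL, huK⟩ := Set.not_subset.mp h.1
    obtain ⟨w, hwL, hwK⟩ := Set.not_subset.mp h.2
    obtain ⟨p, hp⟩ := D.exists_walk_of_mem_image_val_supp hwL huL
    exact huK (p.mem_of_forall_adj_eq hleave (fun h => hp c h hcP') (not_not.mp hwK))
  rw [← Set.ncard_image_of_injective D.supp Subtype.val_injective,
    ← Set.ncard_image_of_injective C.supp Subtype.val_injective]
  rcases hside with hLK | hLK
  · exact Set.ncard_lt_ncard ⟨hLK, fun h => hcL (h hcK)⟩
  · calc L.ncard < Kᶜ.ncard := Set.ncard_lt_ncard ⟨hLK, fun h => hxL (h hxK)⟩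
      _ ≤ K.ncard := by
        have := Set.ncard_add_ncard_compl K
        rw [Set.ncard_image_of_injective C.supp Subtype.val_injective] at this ⊢
        omega

theorem IsTree.exists_isPath_two_mul_ncard_supp_lt [Finite V] (hG : G.IsTree) (r : V) :
    ∃ (v : V) (P : G.Walk r v), P.IsPath ∧
      ∀ C : (G.induce {z | z ∉ P.support}).ConnectedComponent,
        2 * C.supp.ncard < Nat.card V := by
  obtain ⟨m, hm⟩ : ∃ m, ∃ (v : V) (P : G.Walk r v), P.IsPath ∧
      ∀ C : (G.induce {z | z ∉ P.support}).ConnectedComponent, C.supp.ncard < m :=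
    ⟨_, r, .nil, .nil, fun C =>
      Nat.lt_succ_of_le ((Set.ncard_le_card _).trans (Finite.card_subtype_le _))⟩
  induction m using Nat.strong_induction_on with
  | _ m ih =>
    obtain ⟨v, P, hP, hm⟩ := hm
    by_cases hsmall : ∀ C : (G.induce {z | z ∉ P.support}).ConnectedComponent,
        2 * C.supp.ncard < Nat.card V
    · exact ⟨v, P, hP, hsmall⟩
    obtain ⟨C, hC⟩ := not_forall.mp hsmall
    exact ih _ (hm C) (hG.exists_isPath_ncard_supp_lt hP C (not_lt.mp hC))

end SimpleGraph

/-- in a finite tree `T` rooted at `r`, there is a path starting at `r`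
such that every connected component of the subgraph induced on the vertices not on
the path has fewer than `n/2` vertices. -/
theorem stmt3 {V : Type*} [Fintype V] (T : SimpleGraph V) (hT : T.IsTree) (r : V) :
    ∃ (v : V) (P : T.Walk r v), P.IsPath ∧
      ∀ C : (T.induce {z : V | z ∉ P.support}).ConnectedComponent,
        2 * C.supp.ncard < Fintype.card V := by
  simpa only [Nat.card_eq_fintype_card] using hT.exists_isPath_two_mul_ncard_supp_lt r
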